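/- Let C and D be reflexive digraph cycles with D non-contractible. Then Mon_0(C,D), the subgraph of Hom(C,D) induced by the monotone-or-constant maps of wind 0, is isomorphic to D: its vertices are exactly the constant maps φ_i sending all of C to the vertex i of D, and i ↦ φ_i is a digraph isomorphism (i → i+1 in D if and only if φ_i → φ_{i+1} in Hom(C,D), and i ← i+1 if and only if φ_i ← φ_{i+1}). -/

import Mathlib

open scoped Classical

namespace Recon

/-- Orientation letters for edges of a digraph cycle: `+`, `-`, `*`. -/
inductive Orient : Type
  | plus
  | minus
  | star
deriving DecidableEq

/-- A forward arc is allowed along an edge with this orientation letter. -/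
def Orient.fwd : Orient → Prop
  | Orient.plus => True
  | Orient.minus => False
  | Orient.star => True

/-- A backward arc is allowed along an edge with this orientation letter. -/
def Orient.bwd : Orient → Prop
  | Orient.plus => False
  | Orient.minus => True
  | Orient.star => True

/-- The arc relation of the reflexive digraph cycle on `ZMod m` whose orientation
string is `f`, where `f c` is the orientation of the edge from `c` to `c + 1`. -/
def cycRel {m : ℕ} (f : ZMod m → Orient) (u v : ZMod m) : Prop :=
  u = v ∨ (v = u + 1 ∧ (f u).fwd) ∨ (u = v + 1 ∧ (f v).bwd)

/-- `φ` is a digraph homomorphism. -/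
def IsHom {α β : Type*} (rG : α → α → Prop) (rH : β → β → Prop) (φ : α → β) : Prop :=
  ∀ u v, rG u v → rH (φ u) (φ v)

/-- The arc relation of the Hom-graph `Hom(G,H)`. -/
def HomArc {α β : Type*} (rG : α → α → Prop) (rH : β → β → Prop) (φ ψ : α → β) : Prop :=
  ∀ u v, rG u v → rH (φ u) (ψ v)

/-- `φψ` is an edge of the Hom-graph. -/
def HomEdge {α β : Type*} (rG : α → α → Prop) (rH : β → β → Prop) (φ ψ : α → β) : Prop :=
  HomArc rG rH φ ψ ∨ HomArc rG rH ψ φ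

/-- The contribution of the edge `c (c+1)` of `C` to the increase of `φ`:
`1` if increasing, `-1` if decreasing, `0` if stationary. -/
def edgeVal {m n : ℕ} (φ : ZMod m → ZMod n) (c : ZMod m) : ℤ :=
  if φ (c + 1) = φ c + 1 then 1 else if φ (c + 1) = φ c - 1 then -1 else 0

/-- The increase of a map between cycles: #increasing − #decreasing edges. -/
def increase {m n : ℕ} (φ : ZMod m → ZMod n) : ℤ :=
  ∑ j ∈ Finset.range m, edgeVal φ ((j : ℕ) : ZMod m)

/-- The increase of the subpath `c_a … c_{a+L}`. -/
def partialInc {m n : ℕ} (φ : ZMod m → ZMod n) (a : ZMod m) (L : ℕ) : ℤ :=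
  ∑ j ∈ Finset.range L, edgeVal φ (a + ((j : ℕ) : ZMod m))

/-- `φ` has wind `w`, i.e. its increase is `w * n`. -/
def HasWind {m n : ℕ} (φ : ZMod m → ZMod n) (w : ℤ) : Prop :=
  increase φ = w * (n : ℤ)

/-- A reflexive digraph cycle is non-contractible if it has length at least 4
or is a directed 3-cycle. -/
def NonContractible {n : ℕ} (f : ZMod n → Orient) : Prop :=
  4 ≤ n ∨ (n = 3 ∧ ((∀ i, f i = Orient.plus) ∨ (∀ i, f i = Orient.minus)))

/-- `φ` is increasing: every edge increasing or stationary, not all stationary. -/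
def IncMap {m n : ℕ} (φ : ZMod m → ZMod n) : Prop :=
  (∀ c, φ (c + 1) = φ c + 1 ∨ φ (c + 1) = φ c) ∧ ∃ c, φ (c + 1) = φ c + 1

/-- `φ` is decreasing: every edge decreasing. -/
def DecMap {m n : ℕ} (φ : ZMod m → ZMod n) : Prop :=
  ∀ c, φ (c + 1) = φ c - 1

/-- `φ` is monotone: increasing or decreasing. -/
def MonMap {m n : ℕ} (φ : ZMod m → ZMod n) : Prop :=
  IncMap φ ∨ DecMap φ

/-- `φ` is monotone in the weak sense where constant maps also count. -/
def MonOrConst {m n : ℕ} (φ : ZMod m → ZMod n) : Prop :=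
  (∀ c, φ (c + 1) = φ c + 1 ∨ φ (c + 1) = φ c) ∨ DecMap φ

/-- `Y ≤* X`: `Y` is a `*`-substring of `X`, via a strictly increasing selection
function `α` with `Y i = X (α i)` unless `Y i = *`. -/
def StarSub {p q : ℕ} (Y : Fin p → Orient) (X : Fin q → Orient) : Prop :=
  ∃ α : Fin p → Fin q, StrictMono α ∧ ∀ i, Y i = X (α i) ∨ Y i = Orient.star

/-- The orientation string of the (pointed) cycle `f`. -/
def cycStr {m : ℕ} (f : ZMod m → Orient) : Fin m → Orient :=
  fun j => f ((j : ℕ) : ZMod m)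

/-- The orientation string `σ^i(Y^k)` = `(σ^i Y)^k`: the `i`-th shift of the
`k`-fold concatenation of the string of the cycle `fY`. -/
def shiftPowStr {s : ℕ} (fY : ZMod s → Orient) (k : ℕ) (i : ZMod s) :
    Fin (k * s) → Orient :=
  fun j => fY (i + ((j : ℕ) : ZMod s))

/-- The orientation string `σ^i(Y)^k y_{i+1}` : the `i`-th shift of the `k`-fold
concatenation of the string of `fY`, extended by its own first letter. -/
def shiftPowExtStr {s : ℕ} (fY : ZMod s → Orient) (k : ℕ) (i : ZMod s) :
    Fin (k * s + 1) → Orient :=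
  fun j => fY (i + ((j : ℕ) : ZMod s))

/-- Every vertex that moves from `φ` to `ψ`, moves up. -/
def MovesUpOnly {m n : ℕ} (φ ψ : ZMod m → ZMod n) : Prop :=
  ∀ c, ψ c = φ c ∨ ψ c = φ c + 1

/-- Every vertex that moves from `φ` to `ψ`, moves down. -/
def MovesDownOnly {m n : ℕ} (φ ψ : ZMod m → ZMod n) : Prop :=
  ∀ c, ψ c = φ c ∨ ψ c = φ c - 1

/-- `φψ` is an up edge of the Hom-graph. -/
def UpEdge {m n : ℕ} (rC : ZMod m → ZMod m → Prop) (rD : ZMod n → ZMod n → Prop)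
    (φ ψ : ZMod m → ZMod n) : Prop :=
  HomEdge rC rD φ ψ ∧ MovesUpOnly φ ψ

/-- `φ` and `ψ` are joined by a path (walk) inside the induced subgraph on `S`. -/
def ConnIn {m n : ℕ} (rC : ZMod m → ZMod m → Prop) (rD : ZMod n → ZMod n → Prop)
    (S : Set (ZMod m → ZMod n)) (φ ψ : ZMod m → ZMod n) : Prop :=
  Relation.ReflTransGen (fun a b => a ∈ S ∧ b ∈ S ∧ HomEdge rC rD a b) φ ψ

/-- `ψ` is reachable from `φ` by a path of up edges inside `S`. -/
def UpReachIn {m n : ℕ} (rC : ZMod m → ZMod m → Prop) (rD : ZMod n → ZMod n → Prop)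
    (S : Set (ZMod m → ZMod n)) (φ ψ : ZMod m → ZMod n) : Prop :=
  Relation.ReflTransGen (fun a b => a ∈ S ∧ b ∈ S ∧ UpEdge rC rD a b) φ ψ

/-- One step of a path of up edges between homomorphisms. -/
def UpStep {m n : ℕ} (rC : ZMod m → ZMod m → Prop) (rD : ZMod n → ZMod n → Prop)
    (φ ψ : ZMod m → ZMod n) : Prop :=
  IsHom rC rD φ ∧ IsHom rC rD ψ ∧ UpEdge rC rD φ ψ

/-- The set of vertices on which `φ` and `φ'` differ. -/
def Neq {α β : Type*} (φ φ' : α → β) : Set α := {g | φ g ≠ φ' g}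

/-- The map `φ_T`, agreeing with `φ'` on `T` and with `φ` elsewhere. -/
noncomputable def refineMap {α β : Type*} (φ φ' : α → β) (T : Set α) : α → β :=
  fun g => if g ∈ T then φ' g else φ g

/-- The edge `φφ'` is non-refinable: no nonempty proper subset `T` of `Neq φ φ'`
yields a homomorphism `φ_T`. -/
def NonRefinable {α β : Type*} (rG : α → α → Prop) (rH : β → β → Prop)
    (φ φ' : α → β) : Prop :=
  ¬ ∃ T : Set α, T.Nonempty ∧ T ⊂ Neq φ φ' ∧ IsHom rG rH (refineMap φ φ' T)

/-- `T` is a strong component of the digraph `r`. -/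
def IsStrongComponent {α : Type*} (r : α → α → Prop) (T : Set α) : Prop :=
  T.Nonempty ∧ (∀ u ∈ T, ∀ v ∈ T, Relation.ReflTransGen r u v) ∧
    ∀ T' : Set α, T ⊆ T' → (∀ u ∈ T', ∀ v ∈ T', Relation.ReflTransGen r u v) → T' = T

/-- `T` has no arcs out to vertices not in `T`. -/
def IsTerminal {α : Type*} (r : α → α → Prop) (T : Set α) : Prop :=
  ∀ u ∈ T, ∀ v, r u v → v ∈ T

/-- `Mon_1(C,D;i)`: monotone wind-1 homomorphisms `φ` with `φ c₀ = i`. -/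
def Mon1 {m n : ℕ} (fC : ZMod m → Orient) (fD : ZMod n → Orient) (i : ZMod n) :
    Set (ZMod m → ZMod n) :=
  {φ | IsHom (cycRel fC) (cycRel fD) φ ∧ MonMap φ ∧ increase φ = (n : ℤ) ∧ φ 0 = i}

/-- A one-step up edge: an edge from `φ` obtained by moving all the vertices of a
subpath of `C` mapped to a single vertex `d` up to `d + 1`. -/
def OneStepUp {m n : ℕ} (rC : ZMod m → ZMod m → Prop) (rD : ZMod n → ZMod n → Prop)
    (φ φ' : ZMod m → ZMod n) : Prop :=
  HomEdge rC rD φ φ' ∧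
    ∃ (a : ZMod m) (k : ℕ) (d : ZMod n), k < m ∧
      (∀ j : ℕ, j ≤ k → φ (a + ((j : ℕ) : ZMod m)) = d) ∧
      ∀ c, φ' c = if ∃ j : ℕ, j ≤ k ∧ c = a + ((j : ℕ) : ZMod m) then d + 1 else φ c

/-- The number of increasing edges of `φ` among the first `j` edges of `C`. -/
def incBefore {m n : ℕ} (φ : ZMod m → ZMod n) (j : ℕ) : ℕ :=
  ((Finset.range j).filter fun t =>
    φ (((t : ℕ) : ZMod m) + 1) = φ ((t : ℕ) : ZMod m) + 1).card

/-- One cutback-pushing step: `φ'` is obtained from `φ` by replacing the values of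
`φ` on a cutback `c_a … c_{a+L}` by `φ a`. -/
def CutbackStep {m n : ℕ} (φ φ' : ZMod m → ZMod n) : Prop :=
  ∃ (a : ZMod m) (L : ℕ), L < m ∧ partialInc φ a L = 0 ∧
    (∀ j : ℕ, 0 < j → j < L → partialInc φ a j < 0) ∧
    ∀ c, φ' c = if ∃ j : ℕ, j ≤ L ∧ c = a + ((j : ℕ) : ZMod m) then φ a else φ c

/-- `Mon_1^+(C,D;i)`: wind-1 homomorphisms whose monotone push-up is in `Mon_1(C,D;i)`. -/
def Mon1Plus {m n : ℕ} (fC : ZMod m → Orient) (fD : ZMod n → Orient) (i : ZMod n) :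
    Set (ZMod m → ZMod n) :=
  {φ | IsHom (cycRel fC) (cycRel fD) φ ∧ increase φ = (n : ℤ) ∧
    ∃ ψ ∈ Mon1 fC fD i, Relation.ReflTransGen CutbackStep φ ψ}

lemma one_ne_zero_zmod {n : ℕ} (hn : 3 ≤ n) : (1 : ZMod n) ≠ 0 := by
  haveI : NeZero n := ⟨by omega⟩
  intro h
  have : ((1 : ℕ) : ZMod n) = 0 := by exact_mod_cast h
  have hd := (ZMod.natCast_eq_zero_iff 1 n).mp this
  have := Nat.le_of_dvd one_pos hd
  omega

lemma two_ne_zero_zmod {n : ℕ} (hn : 3 ≤ n) : (2 : ZMod n) ≠ 0 := by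
  haveI : NeZero n := ⟨by omega⟩
  intro h
  have : ((2 : ℕ) : ZMod n) = 0 := by exact_mod_cast h
  have hd := (ZMod.natCast_eq_zero_iff 2 n).mp this
  have := Nat.le_of_dvd two_pos hd
  omega

lemma const_of_stationary {m n : ℕ} (hm : 3 ≤ m) {φ : ZMod m → ZMod n}
    (h : ∀ c, φ (c + 1) = φ c) : ∀ c, φ c = φ 0 := by
  haveI : NeZero m := ⟨by omega⟩
  have key : ∀ k : ℕ, φ ((k : ℕ) : ZMod m) = φ 0 := by
    intro k
    induction k with
    | zero => simp
    | succ k ih =>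
      have : (((k + 1 : ℕ)) : ZMod m) = ((k : ℕ) : ZMod m) + 1 := by push_cast; ring
      rw [this, h, ih]
  intro c
  have : ((c.val : ℕ) : ZMod m) = c := by
    simp [ZMod.natCast_val, ZMod.cast_id]
  rw [← this, key]

/-- `Mon_0(C,D)` is isomorphic to `D`: its vertices are exactly the
constant maps `φ_i`, the map `i ↦ φ_i` is injective, and it preserves and reflects
the arcs between consecutive vertices of `D`. -/
theorem mon_zero_iso (m n : ℕ) (hm : 3 ≤ m)
    (fC : ZMod m → Orient) (fD : ZMod n → Orient) (hD : NonContractible fD) :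
    ({φ : ZMod m → ZMod n |
        IsHom (cycRel fC) (cycRel fD) φ ∧ MonOrConst φ ∧ increase φ = 0} =
      Set.range fun i : ZMod n => fun _ : ZMod m => i) ∧
    Function.Injective (fun i : ZMod n => (fun _ => i : ZMod m → ZMod n)) ∧
    ∀ i : ZMod n,
      (cycRel fD i (i + 1) ↔
        HomArc (cycRel fC) (cycRel fD) (fun _ => i) (fun _ => i + 1)) ∧
      (cycRel fD (i + 1) i ↔
        HomArc (cycRel fC) (cycRel fD) (fun _ => i + 1) (fun _ => i)) := by
  have hn : 3 ≤ n := by rcases hD with h | ⟨h, _⟩ <;> omega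
  haveI : NeZero m := ⟨by omega⟩
  have h1 : (1 : ZMod n) ≠ 0 := one_ne_zero_zmod hn
  have h2 : (2 : ZMod n) ≠ 0 := two_ne_zero_zmod hn
  -- basic facts about ZMod n
  have hne1 : ∀ x : ZMod n, x + 1 ≠ x := by
    intro x h; apply h1; have := congrArg (· - x) h; simpa using this
  have hne2 : ∀ x : ZMod n, x - 1 ≠ x := by
    intro x h; apply h1; have := congrArg (fun y => x - y) h; simpa using this
  have hne3 : ∀ x : ZMod n, x - 1 ≠ x + 1 := by
    intro x h; apply h2
    have := congrArg (fun y => (x + 1) - y) h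
    change x + 1 - (x - 1) = x + 1 - (x + 1) at this
    rw [show x + 1 - (x - 1) = 2 by ring, sub_self] at this
    exact this
  -- edgeVal of a constant map is 0
  have hconstInc : ∀ i : ZMod n, increase (fun _ : ZMod m => i) = 0 := by
    intro i
    unfold increase
    apply Finset.sum_eq_zero
    intro j _
    unfold edgeVal
    simp only
    rw [if_neg (fun h => hne1 i h.symm), if_neg (fun h => hne2 i h.symm)]
  -- constant maps are homomorphisms
  have hconstHom : ∀ i : ZMod n, IsHom (cycRel fC) (cycRel fD) (fun _ : ZMod m => i) := by
    intro i u v _; exact Or.inl rfl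
  constructor
  · -- set equality
    ext φ
    constructor
    · rintro ⟨hhom, hmon, hinc⟩
      -- show φ is constant
      have hstat : ∀ c, φ (c + 1) = φ c := by
        rcases hmon with hup | hdec
        · -- all edges increasing or stationary
          have hnn : ∀ j ∈ Finset.range m, 0 ≤ edgeVal φ ((j : ℕ) : ZMod m) := by
            intro j _
            unfold edgeVal
            rcases hup ((j : ℕ) : ZMod m) with h | h
            · rw [if_pos h]; norm_num
            · rw [if_neg, if_neg]
              · rw [h]; exact fun hc => hne2 _ hc.symm
              · rw [h]; exact fun hc => hne1 _ hc.symm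
          have hzero := (Finset.sum_eq_zero_iff_of_nonneg hnn).mp hinc
          intro c
          have hc : c.val ∈ Finset.range m := Finset.mem_range.mpr (ZMod.val_lt c)
          have := hzero c.val hc
          have hcv : ((c.val : ℕ) : ZMod m) = c := by
            simp [ZMod.natCast_val, ZMod.cast_id]
          rw [hcv] at this
          rcases hup c with h | h
          · exfalso
            unfold edgeVal at this
            rw [if_pos h] at this
            norm_num at this
          · exact h
        · -- decreasing: increase = -m, contradiction
          exfalso
          have : increase φ = -(m : ℤ) := by
            unfold increase
            have : ∀ j ∈ Finset.range m, edgeVal φ ((j : ℕ) : ZMod m) = -1 := by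
              intro j _
              unfold edgeVal
              have hd := hdec ((j : ℕ) : ZMod m)
              rw [if_neg, if_pos hd]
              rw [hd]; exact hne3 _
            rw [Finset.sum_congr rfl this]
            simp
          rw [this] at hinc
          omega
      have hconst := const_of_stationary hm hstat
      exact ⟨φ 0, by funext c; exact (hconst c).symm⟩
    · rintro ⟨i, rfl⟩
      refine ⟨hconstHom i, Or.inl fun c => Or.inr rfl, hconstInc i⟩
  constructor
  · intro i j h
    exact congrFun h 0
  · intro i
    constructor
    · constructor
      · intro h u v _; exact h
      · intro h; exact h 0 0 (Or.inl rfl)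
    · constructor
      · intro h u v _; exact h
      · intro h; exact h 0 0 (Or.inl rfl)

end Recon
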